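/- arXiv:1811.00139 — 5 statements merged into one kernel-verified Lean document; each statement's English description precedes it below -/
import Mathlib

section
/- For x > 1 and ε ∈ [0,1], (x−1)^ε · Γ(x−ε) ≤ Γ(x) ≤ (x−ε)^ε · Γ(x−ε). -/
theorem stmt_2 (x ε : ℝ) (hx : 1 < x) (hε : ε ∈ Set.Icc (0:ℝ) 1) :
    (x - 1) ^ ε * Real.Gamma (x - ε) ≤ Real.Gamma x ∧
      Real.Gamma x ≤ (x - ε) ^ ε * Real.Gamma (x - ε) := by
  obtain ⟨hε0, hε1⟩ := hε
  have hx1 : (0:ℝ) < x - 1 := by linarith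
  have hxε : (0:ℝ) < x - ε := by linarith
  have hΓ : Real.Gamma x = (x - 1) * Real.Gamma (x - 1) := by
    have h := Real.Gamma_add_one (s := x - 1) (by positivity)
    rw [show x - 1 + 1 = x by ring] at h
    exact h
  rcases eq_or_lt_of_le hε0 with h0 | h0
  · subst h0; simp
  rcases eq_or_lt_of_le hε1 with h1 | h1
  · subst h1
    rw [hΓ]
    constructor
    · rw [Real.rpow_one]
    · rw [Real.rpow_one]
  have hΓxε : 0 < Real.Gamma (x - ε) := Real.Gamma_pos_of_pos hxε
  have ha : (0:ℝ) < ε := h0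
  have hb : (0:ℝ) < 1 - ε := by linarith
  constructor
  · -- lower bound: Γ(x-ε) ≤ Γ(x-1)^ε Γ(x)^(1-ε)
    have key := Real.Gamma_mul_add_mul_le_rpow_Gamma_mul_rpow_Gamma
      (s := x - 1) (t := x) hx1 (by positivity) ha hb (by ring)
    have heq : ε * (x - 1) + (1 - ε) * x = x - ε := by ring
    rw [heq] at key
    have hΓx1 : 0 ≤ Real.Gamma (x - 1) := (Real.Gamma_pos_of_pos hx1).le
    have hΓx : 0 < Real.Gamma x := Real.Gamma_pos_of_pos (by positivity)
    calc (x - 1) ^ ε * Real.Gamma (x - ε)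
        ≤ (x - 1) ^ ε * (Real.Gamma (x - 1) ^ ε * Real.Gamma x ^ (1 - ε)) := by
          exact mul_le_mul_of_nonneg_left key (Real.rpow_nonneg hx1.le ε)
      _ = ((x - 1) * Real.Gamma (x - 1)) ^ ε * Real.Gamma x ^ (1 - ε) := by
          rw [Real.mul_rpow hx1.le hΓx1]; ring
      _ = Real.Gamma x ^ ε * Real.Gamma x ^ (1 - ε) := by rw [← hΓ]
      _ = Real.Gamma x := by
          rw [← Real.rpow_add hΓx]; simp
  · -- upper bound
    have key := Real.Gamma_mul_add_mul_le_rpow_Gamma_mul_rpow_Gamma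
      (s := x - ε) (t := x - ε + 1) hxε (by positivity) hb ha (by ring)
    have heq : (1 - ε) * (x - ε) + ε * (x - ε + 1) = x := by ring
    rw [heq, Real.Gamma_add_one (by positivity)] at key
    calc Real.Gamma x
        ≤ Real.Gamma (x - ε) ^ (1 - ε) * ((x - ε) * Real.Gamma (x - ε)) ^ ε := key
      _ = (x - ε) ^ ε * Real.Gamma (x - ε) := by
          rw [Real.mul_rpow hxε.le hΓxε.le, ← mul_assoc,
            mul_comm (Real.Gamma (x - ε) ^ (1 - ε)), mul_assoc,
            ← Real.rpow_add hΓxε]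
          simp
end

section
/- Let σ be the uniform distribution over the sphere of radius r in ℝ^n with n ≥ 4, and let u be a unit vector. Then for any t ≥ 0, P_{x∼σ}[⟨u,x⟩ ≥ t] ≤ √2 · exp(−t²(n−2)/(2r²)). -/
/-!
The moments `Mₘ = ∫ xᵢ ^ m dσ` satisfy `(n + m) M_{m+2} = (m + 1) r² Mₘ`: summing `xᵢ ^ m xⱼ ^ 2`
over `j` gives `r² Mₘ`, and for `j ≠ i` invariance under the rotations of the `(i, j)`-plane gives
the Stein identity `M_{m+2} = (m + 1) ∫ xᵢ ^ m xⱼ ^ 2 dσ`. So the even moments are at most those of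
a centred Gaussian of variance `r² / n`, the odd ones vanish by symmetry, and
`∫ exp (l xᵢ) dσ ≤ exp (l² r² / (2 n))`. A reflection taking `u` to a coordinate vector and
Chernoff's bound give `σ {t ≤ ⟪u, x⟫} ≤ exp (-t² n / (2 r²))`.
-/

open MeasureTheory Real
open scoped RealInnerProductSpace

theorem integral_eq_zero_of_hasDerivAt_of_integral_eq {α : Type*} [MeasurableSpace α]
    {μ : Measure α} [IsFiniteMeasure μ] {F F' : ℝ → α → ℝ} {C : ℝ}
    (hF : ∀ φ, ∫ x, F φ x ∂μ = ∫ x, F 0 x ∂μ) (hF_meas : ∀ φ, AEStronglyMeasurable (F φ) μ)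
    (hF_int : Integrable (F 0) μ) (hF'_meas : AEStronglyMeasurable (F' 0) μ)
    (h_bound : ∀ᵐ x ∂μ, ∀ φ, |F' φ x| ≤ C)
    (h_diff : ∀ᵐ x ∂μ, ∀ φ, HasDerivAt (F · x) (F' φ x) φ) :
    ∫ x, F' 0 x ∂μ = 0 := by
  have hderiv := (hasDerivAt_integral_of_dominated_loc_of_deriv_le (bound := fun _ ↦ C)
    Filter.univ_mem (Filter.Eventually.of_forall hF_meas) hF_int hF'_meas
    (h_bound.mono fun x hx φ _ ↦ hx φ) (integrable_const C)
    (h_diff.mono fun x hx φ _ ↦ hx φ)).2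
  rw [show (fun φ ↦ ∫ x, F φ x ∂μ) = fun _ ↦ ∫ x, F 0 x ∂μ from funext hF] at hderiv
  exact hderiv.unique (hasDerivAt_const _ _)

namespace EuclideanSpace

variable {n : ℕ}

theorem pos_of_norm_ne_zero {u : EuclideanSpace ℝ (Fin n)} (hu : ‖u‖ ≠ 0) : 0 < n := by
  by_contra h
  obtain rfl : n = 0 := by omega
  simp [Subsingleton.elim u 0] at hu

noncomputable def planeRotationFun (i j : Fin n) (φ : ℝ) (x : EuclideanSpace ℝ (Fin n)) :
    EuclideanSpace ℝ (Fin n) :=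
  WithLp.toLp 2 fun t ↦ if t = i then cos φ * x i - sin φ * x j
    else if t = j then sin φ * x i + cos φ * x j else x t

theorem planeRotationFun_sum_sq {i j : Fin n} (hij : i ≠ j) (φ : ℝ)
    (x : EuclideanSpace ℝ (Fin n)) :
    ∑ t, planeRotationFun i j φ x t ^ 2 = ∑ t, x t ^ 2 := by
  have split (y : Fin n → ℝ) : ∑ t, y t ^ 2 = y i ^ 2 + y j ^ 2 + ∑ t ∈ {i, j}ᶜ, y t ^ 2 := by
    rw [← Finset.sum_add_sum_compl {i, j}, Finset.sum_pair hij]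
  rw [split, split]
  have hrest : ∑ t ∈ {i, j}ᶜ, planeRotationFun i j φ x t ^ 2 = ∑ t ∈ {i, j}ᶜ, x t ^ 2 :=
    Finset.sum_congr rfl fun t ht ↦ by
      simp only [Finset.mem_compl, Finset.mem_insert, Finset.mem_singleton, not_or] at ht
      simp [planeRotationFun, ht.1, ht.2]
  rw [hrest]
  simp only [planeRotationFun, PiLp.toLp_apply, if_pos, if_neg hij.symm]
  linear_combination (x i ^ 2 + x j ^ 2) * sin_sq_add_cos_sq φ

noncomputable def planeRotation {i j : Fin n} (hij : i ≠ j) (φ : ℝ) :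
    EuclideanSpace ℝ (Fin n) ≃ₗᵢ[ℝ] EuclideanSpace ℝ (Fin n) :=
  LinearIsometry.toLinearIsometryEquiv
    { toFun := planeRotationFun i j φ
      map_add' := fun x y ↦ by
        ext t
        simp only [planeRotationFun, PiLp.add_apply, PiLp.toLp_apply]
        split_ifs <;> ring
      map_smul' := fun c x ↦ by
        ext t
        simp only [planeRotationFun, PiLp.toLp_apply, PiLp.smul_apply, smul_eq_mul,
          RingHom.id_apply]
        split_ifs <;> ring
      norm_map' := fun x ↦ by
        simp only [EuclideanSpace.norm_eq, Real.norm_eq_abs, sq_abs, LinearMap.coe_mk,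
          AddHom.coe_mk, planeRotationFun_sum_sq hij] }
    rfl

theorem planeRotation_apply_left {i j : Fin n} (hij : i ≠ j) (φ : ℝ)
    (x : EuclideanSpace ℝ (Fin n)) : planeRotation hij φ x i = cos φ * x i - sin φ * x j :=
  if_pos rfl

theorem planeRotation_apply_right {i j : Fin n} (hij : i ≠ j) (φ : ℝ)
    (x : EuclideanSpace ℝ (Fin n)) : planeRotation hij φ x j = sin φ * x i + cos φ * x j := by
  simp [planeRotation, planeRotationFun, hij.symm]

end EuclideanSpace

open EuclideanSpace

section InvariantMeasure

variable {n : ℕ} {σ : Measure (EuclideanSpace ℝ (Fin n))}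

theorem integral_comp_linearIsometryEquiv_of_map_eq
    (e : EuclideanSpace ℝ (Fin n) ≃ₗᵢ[ℝ] EuclideanSpace ℝ (Fin n)) (he : σ.map e = σ)
    (f : EuclideanSpace ℝ (Fin n) → ℝ) : ∫ x, f (e x) ∂σ = ∫ x, f x ∂σ :=
  MeasurePreserving.integral_comp' (f := e.toMeasurableEquiv) ⟨e.continuous.measurable, he⟩ f

theorem integral_sinh_mul_coord_eq_zero
    (hRI : ∀ e : EuclideanSpace ℝ (Fin n) ≃ₗᵢ[ℝ] EuclideanSpace ℝ (Fin n), σ.map e = σ)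
    (i : Fin n) (l : ℝ) : ∫ x, sinh (l * x i) ∂σ = 0 := by
  have h := integral_comp_linearIsometryEquiv_of_map_eq (LinearIsometryEquiv.neg ℝ) (hRI _)
    fun x ↦ sinh (l * x i)
  simp only [LinearIsometryEquiv.coe_neg, PiLp.neg_apply, mul_neg, sinh_neg,
    integral_neg] at h
  linarith

variable [IsProbabilityMeasure σ] {r : ℝ}

theorem integrable_of_continuous_of_ae_norm_eq (hσ : ∀ᵐ x ∂σ, ‖x‖ = r)
    {f : EuclideanSpace ℝ (Fin n) → ℝ} (hf : Continuous f) : Integrable f σ := by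
  obtain ⟨C, hC⟩ := (isCompact_sphere 0 r).exists_bound_of_continuousOn hf.continuousOn
  exact .of_bound hf.aestronglyMeasurable C (hσ.mono fun x hx ↦ hC x (by simpa using hx))

/-- Differentiate at `φ = 0` the function `φ ↦ ∫ (R_φ x)ᵢ ^ (m + 1) (R_φ x)ⱼ dσ`, constant because
`σ` is invariant under the rotations `R_φ` of the `(i, j)`-plane. -/
theorem integral_coord_pow_add_two
    (hRI : ∀ e : EuclideanSpace ℝ (Fin n) ≃ₗᵢ[ℝ] EuclideanSpace ℝ (Fin n), σ.map e = σ)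
    (hσ : ∀ᵐ x ∂σ, ‖x‖ = r) {i j : Fin n} (hij : i ≠ j) (m : ℕ) :
    ∫ x, x i ^ (m + 2) ∂σ = (m + 1) * ∫ x, x i ^ m * x j ^ 2 ∂σ := by
  set a : ℝ → EuclideanSpace ℝ (Fin n) → ℝ := fun φ x ↦ cos φ * x i - sin φ * x j
  set b : ℝ → EuclideanSpace ℝ (Fin n) → ℝ := fun φ x ↦ sin φ * x i + cos φ * x j
  have hrot (φ : ℝ) (x : EuclideanSpace ℝ (Fin n)) :
      a φ x = planeRotation hij φ x i ∧ b φ x = planeRotation hij φ x j :=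
    ⟨(planeRotation_apply_left hij φ x).symm, (planeRotation_apply_right hij φ x).symm⟩
  have hinv (φ : ℝ) : ∫ x, a φ x ^ (m + 1) * b φ x ∂σ = ∫ x, x i ^ (m + 1) * x j ∂σ := by
    simp only [hrot]
    exact integral_comp_linearIsometryEquiv_of_map_eq _ (hRI _) fun y ↦ y i ^ (m + 1) * y j
  obtain ⟨C, hC⟩ := (isCompact_sphere 0 r).exists_bound_of_continuousOn
    (f := fun y : EuclideanSpace ℝ (Fin n) ↦ y i ^ (m + 2) - (m + 1) * y i ^ m * y j ^ 2)
    (by fun_prop)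
  have hderiv := integral_eq_zero_of_hasDerivAt_of_integral_eq
    (μ := σ) (F := fun φ x ↦ a φ x ^ (m + 1) * b φ x)
    (F' := fun φ x ↦ a φ x ^ (m + 2) - (m + 1) * a φ x ^ m * b φ x ^ 2) (C := C)
    (fun φ ↦ by rw [hinv, hinv]) (fun φ ↦ Continuous.aestronglyMeasurable (by fun_prop))
    (integrable_of_continuous_of_ae_norm_eq hσ (by fun_prop))
    (Continuous.aestronglyMeasurable (by fun_prop))
    (hσ.mono fun x hx φ ↦ by
      simp only [hrot]
      exact hC _ (by simp [hx]))
    (Filter.Eventually.of_forall fun x φ ↦ by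
      have ha : HasDerivAt (a · x) (-b φ x) φ :=
        (((hasDerivAt_cos φ).mul_const (x i)).sub
          ((hasDerivAt_sin φ).mul_const (x j))).congr_deriv (by simp only [b]; ring)
      have hb : HasDerivAt (b · x) (a φ x) φ :=
        (((hasDerivAt_sin φ).mul_const (x i)).add
          ((hasDerivAt_cos φ).mul_const (x j))).congr_deriv (by simp only [a]; ring)
      exact ((ha.fun_pow (m + 1)).mul hb).congr_deriv (by push_cast; ring))
  simp only [a, b, cos_zero, sin_zero, one_mul, zero_mul, sub_zero, zero_add, mul_assoc]
    at hderiv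
  rw [integral_sub (integrable_of_continuous_of_ae_norm_eq hσ (by fun_prop))
    (integrable_of_continuous_of_ae_norm_eq hσ (by fun_prop)), integral_const_mul] at hderiv
  linarith

theorem sum_integral_coord_pow_mul_coord_sq (hσ : ∀ᵐ x ∂σ, ‖x‖ = r) (i : Fin n) (m : ℕ) :
    ∑ j, ∫ x, x i ^ m * x j ^ 2 ∂σ = r ^ 2 * ∫ x, x i ^ m ∂σ := by
  rw [← integral_finsetSum _ fun j _ ↦ integrable_of_continuous_of_ae_norm_eq hσ (by fun_prop),
    ← integral_const_mul]
  refine integral_congr_ae (hσ.mono fun x hx ↦ ?_)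
  simp only [← Finset.mul_sum, ← EuclideanSpace.real_norm_sq_eq, hx, mul_comm]

theorem integral_coord_pow_add_two_mul
    (hRI : ∀ e : EuclideanSpace ℝ (Fin n) ≃ₗᵢ[ℝ] EuclideanSpace ℝ (Fin n), σ.map e = σ)
    (hσ : ∀ᵐ x ∂σ, ‖x‖ = r) (i : Fin n) (m : ℕ) :
    (n + m) * ∫ x, x i ^ (m + 2) ∂σ = (m + 1) * r ^ 2 * ∫ x, x i ^ m ∂σ := by
  classical
  have hsum := sum_integral_coord_pow_mul_coord_sq hσ i m
  rw [Fintype.sum_eq_add_sum_compl i] at hsum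
  simp only [← pow_add] at hsum
  have hrest : (m + 1) * ∑ j ∈ {i}ᶜ, ∫ x, x i ^ m * x j ^ 2 ∂σ
      = (n - 1) * ∫ x, x i ^ (m + 2) ∂σ := by
    rw [Finset.mul_sum, Finset.sum_congr rfl fun j hj ↦
      (integral_coord_pow_add_two hRI hσ (by simpa [eq_comm] using hj) m).symm,
      Finset.sum_const, Finset.card_compl, Finset.card_singleton, Fintype.card_fin, nsmul_eq_mul,
      Nat.cast_sub i.pos, Nat.cast_one]
  linear_combination (m + 1 : ℝ) * hsum - hrest

theorem integral_coord_pow_add_two_le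
    (hRI : ∀ e : EuclideanSpace ℝ (Fin n) ≃ₗᵢ[ℝ] EuclideanSpace ℝ (Fin n), σ.map e = σ)
    (hσ : ∀ᵐ x ∂σ, ‖x‖ = r) (i : Fin n) (k : ℕ) :
    n * ∫ x, x i ^ (2 * k + 2) ∂σ ≤ (2 * k + 1) * r ^ 2 * ∫ x, x i ^ (2 * k) ∂σ := by
  have hrec := integral_coord_pow_add_two_mul hRI hσ i (2 * k)
  have hnonneg : 0 ≤ ∫ x, x i ^ (2 * k + 2) ∂σ :=
    integral_nonneg fun x ↦ (show Even (2 * k + 2) from ⟨k + 1, by ring⟩).pow_nonneg _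
  push_cast at hrec
  nlinarith

theorem taylor_coeff_mul_integral_coord_pow_le
    (hRI : ∀ e : EuclideanSpace ℝ (Fin n) ≃ₗᵢ[ℝ] EuclideanSpace ℝ (Fin n), σ.map e = σ)
    (hσ : ∀ᵐ x ∂σ, ‖x‖ = r) (i : Fin n) (l : ℝ) (k : ℕ) :
    l ^ (2 * k) / (2 * k).factorial * ∫ x, x i ^ (2 * k) ∂σ
      ≤ (l ^ 2 * r ^ 2 / (2 * n)) ^ k / k.factorial := by
  induction k with
  | zero => simp
  | succ k ih =>
    have hn : (0 : ℝ) < n := by exact_mod_cast i.pos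
    have hstep := integral_coord_pow_add_two_le hRI hσ i k
    have hfac : ((2 * (k + 1)).factorial : ℝ) = (2 * k + 2) * (2 * k + 1) * (2 * k).factorial := by
      rw [show 2 * (k + 1) = 2 * k + 1 + 1 by ring, Nat.factorial_succ, Nat.factorial_succ]
      push_cast
      ring
    set c := l ^ 2 * r ^ 2 / (2 * n)
    set A := l ^ (2 * k) / ((2 * k).factorial : ℝ)
    have hA : 0 ≤ A := div_nonneg (by rw [pow_mul]; positivity) (by positivity)
    calc l ^ (2 * (k + 1)) / ((2 * (k + 1)).factorial : ℝ) * ∫ x, x i ^ (2 * (k + 1)) ∂σ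
        = l ^ 2 / ((2 * k + 2) * (2 * k + 1) * n) * (A * (n * ∫ x, x i ^ (2 * k + 2) ∂σ)) := by
          rw [hfac, show 2 * (k + 1) = 2 * k + 2 by ring]
          simp only [A]
          field_simp
          ring
      _ ≤ l ^ 2 / ((2 * k + 2) * (2 * k + 1) * n)
            * (A * ((2 * k + 1) * r ^ 2 * ∫ x, x i ^ (2 * k) ∂σ)) := by gcongr
      _ = c / (k + 1) * (A * ∫ x, x i ^ (2 * k) ∂σ) := by
          simp only [c]
          field_simp
      _ ≤ c / (k + 1) * (c ^ k / k.factorial) := by gcongr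
      _ = c ^ (k + 1) / (k + 1).factorial := by
          rw [Nat.factorial_succ]
          push_cast
          field_simp
          ring

theorem integral_cosh_mul_coord_le
    (hRI : ∀ e : EuclideanSpace ℝ (Fin n) ≃ₗᵢ[ℝ] EuclideanSpace ℝ (Fin n), σ.map e = σ)
    (hσ : ∀ᵐ x ∂σ, ‖x‖ = r) (i : Fin n) (l : ℝ) :
    ∫ x, cosh (l * x i) ∂σ ≤ exp (l ^ 2 * r ^ 2 / (2 * n)) := by
  set F : ℕ → EuclideanSpace ℝ (Fin n) → ℝ :=
    fun k x ↦ l ^ (2 * k) / (2 * k).factorial * x i ^ (2 * k)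
  have hF_nonneg (k : ℕ) (x : EuclideanSpace ℝ (Fin n)) : 0 ≤ F k x := by
    simp only [F, pow_mul]
    positivity
  have hF_int (k : ℕ) : Integrable (F k) σ :=
    integrable_of_continuous_of_ae_norm_eq hσ (by fun_prop)
  have hbound (k : ℕ) : ∫ x, F k x ∂σ ≤ (l ^ 2 * r ^ 2 / (2 * n)) ^ k / k.factorial := by
    simpa only [F, integral_const_mul] using taylor_coeff_mul_integral_coord_pow_le hRI hσ i l k
  have hsumm : Summable fun k ↦ ∫ x, F k x ∂σ :=
    .of_nonneg_of_le (fun k ↦ integral_nonneg (hF_nonneg k)) hbound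
      (Real.summable_pow_div_factorial _)
  calc ∫ x, cosh (l * x i) ∂σ = ∫ x, ∑' k, F k x ∂σ := by
        refine integral_congr_ae (Filter.Eventually.of_forall fun x ↦ ?_)
        simp only [cosh_eq_tsum, F, mul_pow, div_mul_eq_mul_div, mul_comm]
    _ = ∑' k, ∫ x, F k x ∂σ := by
        refine (integral_tsum_of_summable_integral_norm hF_int ?_).symm
        simpa only [Real.norm_of_nonneg (hF_nonneg _ _)] using hsumm
    _ ≤ exp (l ^ 2 * r ^ 2 / (2 * n)) :=
        hasSum_le hbound hsumm.hasSum (Real.exp_eq_exp_ℝ ▸ NormedSpace.expSeries_div_hasSum_exp _)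

theorem integral_exp_mul_coord_le
    (hRI : ∀ e : EuclideanSpace ℝ (Fin n) ≃ₗᵢ[ℝ] EuclideanSpace ℝ (Fin n), σ.map e = σ)
    (hσ : ∀ᵐ x ∂σ, ‖x‖ = r) (i : Fin n) (l : ℝ) :
    ∫ x, exp (l * x i) ∂σ ≤ exp (l ^ 2 * r ^ 2 / (2 * n)) := by
  have hsplit (x : EuclideanSpace ℝ (Fin n)) : exp (l * x i) = cosh (l * x i) + sinh (l * x i) :=
    (cosh_add_sinh _).symm
  simp only [hsplit]
  rw [integral_add (integrable_of_continuous_of_ae_norm_eq hσ (by fun_prop))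
    (integrable_of_continuous_of_ae_norm_eq hσ (by fun_prop)),
    integral_sinh_mul_coord_eq_zero hRI, add_zero]
  exact integral_cosh_mul_coord_le hRI hσ i l

theorem integral_exp_mul_inner_le
    (hRI : ∀ e : EuclideanSpace ℝ (Fin n) ≃ₗᵢ[ℝ] EuclideanSpace ℝ (Fin n), σ.map e = σ)
    (hσ : ∀ᵐ x ∂σ, ‖x‖ = r) {u : EuclideanSpace ℝ (Fin n)} (hu : ‖u‖ = 1) (l : ℝ) :
    ∫ x, exp (l * ⟪u, x⟫) ∂σ ≤ exp (l ^ 2 * r ^ 2 / (2 * n)) := by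
  have i : Fin n := ⟨0, pos_of_norm_ne_zero (u := u) (by simp [hu])⟩
  set g := (ℝ ∙ (u - single i 1))ᗮ.reflection
  have hgu : g u = single i 1 := Submodule.reflection_sub (by simp [hu])
  have hcoord (x : EuclideanSpace ℝ (Fin n)) : ⟪u, x⟫ = g x i := by
    rw [← g.inner_map_map, hgu, inner_single_left]
    simp
  simp only [hcoord]
  rw [integral_comp_linearIsometryEquiv_of_map_eq g (hRI g) fun y ↦ exp (l * y i)]
  exact integral_exp_mul_coord_le hRI hσ i l

end InvariantMeasure

theorem stmt_4_general (n : ℕ) (r : ℝ) (hr : 0 < r)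
    (σ : Measure (EuclideanSpace ℝ (Fin n))) [IsProbabilityMeasure σ]
    (hRI : ∀ e : EuclideanSpace ℝ (Fin n) ≃ₗᵢ[ℝ] EuclideanSpace ℝ (Fin n), σ.map e = σ)
    (hsupp : σ {x | ‖x‖ = r} = 1)
    (u : EuclideanSpace ℝ (Fin n)) (hu : ‖u‖ = 1) (t : ℝ) (ht : 0 ≤ t) :
    (σ {x | t ≤ ⟪u, x⟫}).toReal ≤
      Real.sqrt 2 * Real.exp (-(t ^ 2 * ((n : ℝ) - 2)) / (2 * r ^ 2)) := by
  have hσ : ∀ᵐ x ∂σ, ‖x‖ = r := (ae_iff_prob_eq_one (by measurability)).2 hsupp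
  have hn : (0 : ℝ) < n := by exact_mod_cast pos_of_norm_ne_zero (u := u) (by simp [hu])
  set l := t * n / r ^ 2
  have hchernoff := ProbabilityTheory.measure_ge_le_exp_mul_mgf (X := fun x ↦ ⟪u, x⟫) t
    (by positivity : 0 ≤ l) (integrable_of_continuous_of_ae_norm_eq hσ (by fun_prop))
  calc (σ {x | t ≤ ⟪u, x⟫}).toReal
      ≤ exp (-l * t) * exp (l ^ 2 * r ^ 2 / (2 * n)) :=
        hchernoff.trans (by gcongr; exact integral_exp_mul_inner_le hRI hσ hu l)
    _ = exp (-(t ^ 2 * n) / (2 * r ^ 2)) := by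
        rw [← exp_add]
        congr 1
        simp only [l]
        field_simp
        ring
    _ ≤ exp (-(t ^ 2 * (n - 2)) / (2 * r ^ 2)) := by gcongr; linarith
    _ ≤ sqrt 2 * exp (-(t ^ 2 * (n - 2)) / (2 * r ^ 2)) :=
        le_mul_of_one_le_left (exp_pos _).le (by simp [one_le_sqrt])

theorem stmt_4 (n : ℕ) (hn : 4 ≤ n) (r : ℝ) (hr : 0 < r)
    (σ : Measure (EuclideanSpace ℝ (Fin n))) [IsProbabilityMeasure σ]
    (hRI : ∀ e : EuclideanSpace ℝ (Fin n) ≃ₗᵢ[ℝ] EuclideanSpace ℝ (Fin n), σ.map e = σ)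
    (hsupp : σ {x | ‖x‖ = r} = 1)
    (u : EuclideanSpace ℝ (Fin n)) (hu : ‖u‖ = 1) (t : ℝ) (ht : 0 ≤ t) :
    (σ {x | t ≤ ⟪u, x⟫}).toReal ≤
      Real.sqrt 2 * Real.exp (-(t ^ 2 * ((n : ℝ) - 2)) / (2 * r ^ 2)) :=
  stmt_4_general n r hr σ hRI hsupp u hu t ht
end

section
/- For any two halfspaces g(x) = sign(⟨v,x⟩ − q) and h(x) = sign(⟨u,x⟩ − p) with unit normals u, v, and any rotation-invariant distribution μ on ℝ^n, dist_μ(g,h) ≤ α/π + hdist_μ(p,q), where α = arccos⟨u,v⟩ and hdist_μ(p,q) is the distance between the two halfspaces with common normal e₁ and thresholds p, q. -/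
/-!
Split the disagreement region of `g` and `h` through the halfspace `{q ≤ ⟪u, x⟫}`: what remains is
the disagreement of two halfspaces with the same threshold `q` and normals at angle `α`, and that
of two parallel halfspaces with normal `u` and thresholds `q`, `p`. A reflection taking `u` to `e₁`
shows that the latter has measure `hdist_μ(p, q)`.

For the former, average over the rotations `R_θ` of the plane spanned by `u` and `v`. Each `R_θ`
preserves `μ`. For fixed `x`, `θ ↦ ⟪u, R_θ x⟫` is a sinusoid `r cos (θ - φ)` and `θ ↦ ⟪v, R_θ x⟫` is
the same sinusoid shifted by `α`, so `R_θ x` lands in the region for a set of `θ ∈ (0, 2π]` of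
measure at most `2α`. By Fubini, `2π · μ(region) ≤ 2α`.
-/

open MeasureTheory Set Real
open scoped RealInnerProductSpace ENNReal

lemma le_cos_iff_abs_le_arccos {c t : ℝ} (hc : c ≤ 1) (ht : |t| ≤ π) :
    c ≤ cos t ↔ |t| ≤ arccos c := by
  rcases lt_or_ge c (-1) with hc' | hc'
  · simp only [arccos_of_le_neg_one hc'.le, ht, iff_true]
    linarith [neg_one_le_cos t]
  · conv_lhs => rw [← cos_abs, ← cos_arccos hc' hc]
    exact strictAntiOn_cos.le_iff_ge ⟨arccos_nonneg c, arccos_le_pi c⟩ ⟨abs_nonneg t, ht⟩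

lemma volume_Icc_diff_Icc_sub_le (x y a : ℝ) :
    volume (Icc x y \ Icc (x - a) (y - a)) ≤ ENNReal.ofReal |a| := by
  have hsub : Icc x y \ Icc (x - a) (y - a) ⊆ Ico x (x - a) ∪ Ioc (y - a) y := by
    rintro z ⟨⟨hxz, hzy⟩, hz⟩
    simp only [mem_Icc, not_and_or, not_le] at hz
    rcases hz with hz | hz
    · exact Or.inl ⟨hxz, hz⟩
    · exact Or.inr ⟨hz, hzy⟩
  calc volume (Icc x y \ Icc (x - a) (y - a))
      ≤ volume (Ico x (x - a)) + volume (Ioc (y - a) y) :=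
        (measure_mono hsub).trans (measure_union_le _ _)
    _ = ENNReal.ofReal (-a) + ENNReal.ofReal a := by
        rw [volume_Ico, volume_Ioc]; ring_nf
    _ = ENNReal.ofReal |a| := by
        rcases le_total 0 a with ha | ha
        · rw [ENNReal.ofReal_of_nonpos (neg_nonpos.2 ha), zero_add, abs_of_nonneg ha]
        · rw [ENNReal.ofReal_of_nonpos ha, add_zero, abs_of_nonpos ha]

lemma volume_setOf_le_cos_diff_preimage_add_inter_Ioc_le (c a : ℝ) :
    volume (({ψ | c ≤ cos ψ} \ (· + a) ⁻¹' {ψ | c ≤ cos ψ}) ∩ Ioc (-π) π) ≤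
      ENNReal.ofReal |a| := by
  rcases lt_or_ge 1 c with hc | hc
  · have hempty : {ψ | c ≤ cos ψ} = ∅ :=
      eq_empty_of_forall_notMem fun ψ hψ => (cos_le_one ψ).not_gt (hc.trans_le hψ)
    simp [hempty]
  refine (measure_mono ?_).trans (volume_Icc_diff_Icc_sub_le (-arccos c) (arccos c) a)
  rintro ψ ⟨⟨hψ, hψa⟩, hlo, hhi⟩
  have hψπ : |ψ| ≤ π := abs_le.2 ⟨hlo.le, hhi⟩
  have hβ := (le_cos_iff_abs_le_arccos hc hψπ).1 hψ
  refine ⟨abs_le.1 hβ, fun h => hψa ?_⟩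
  have hψa' : |ψ + a| ≤ arccos c := abs_le.2 ⟨by linarith [h.1], by linarith [h.2]⟩
  exact (le_cos_iff_abs_le_arccos hc (hψa'.trans (arccos_le_pi c))).2 hψa'

lemma volume_inter_Ioc_eq_of_periodic {T : ℝ} (hT : 0 < T) {A : Set ℝ} (hA : MeasurableSet A)
    (hper : Function.Periodic (· ∈ A) T) (s t : ℝ) :
    volume (A ∩ Ioc s (s + T)) = volume (A ∩ Ioc t (t + T)) := by
  refine (isAddFundamentalDomain_Ioc hT s).measure_set_eq (isAddFundamentalDomain_Ioc hT t) hA ?_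
  rintro ⟨_, k, rfl⟩
  ext x
  simpa [add_comm x] using hper.zsmul k x

lemma volume_symmDiff_preimage_add_inter_Ioc_le (A : Set ℝ) (α t T : ℝ) :
    volume ((symmDiff A ((· + α) ⁻¹' A)) ∩ Ioc t (t + T)) ≤
      volume ((A \ (· + α) ⁻¹' A) ∩ Ioc t (t + T)) +
        volume ((A \ (· + -α) ⁻¹' A) ∩ Ioc (t + α) (t + α + T)) := by
  have hshift : ((· + α) ⁻¹' A \ A) ∩ Ioc t (t + T) =
      (· + α) ⁻¹' ((A \ (· + -α) ⁻¹' A) ∩ Ioc (t + α) (t + α + T)) := by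
    ext ψ
    simp only [mem_inter_iff, mem_sdiff, mem_preimage, mem_Ioc, add_neg_cancel_right]
    constructor <;> rintro ⟨⟨h₁, h₂⟩, h₃, h₄⟩ <;> refine ⟨⟨h₁, h₂⟩, ?_, ?_⟩ <;> linarith
  calc volume ((symmDiff A ((· + α) ⁻¹' A)) ∩ Ioc t (t + T))
      ≤ volume ((A \ (· + α) ⁻¹' A) ∩ Ioc t (t + T)) +
          volume (((· + α) ⁻¹' A \ A) ∩ Ioc t (t + T)) := by
        rw [Set.symmDiff_def, union_inter_distrib_right]; exact measure_union_le _ _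
    _ = _ := by rw [hshift, measure_preimage_add_right]

lemma volume_setOf_le_cos_sub_diff_preimage_add_inter_Ioc_le (c φ δ s : ℝ) :
    volume (({θ | c ≤ cos (θ - φ)} \ (· + δ) ⁻¹' {θ | c ≤ cos (θ - φ)}) ∩ Ioc s (s + 2 * π)) ≤
      ENNReal.ofReal |δ| := by
  set D := {ψ | c ≤ cos ψ} \ (· + δ) ⁻¹' {ψ | c ≤ cos ψ}
  have hD : MeasurableSet D :=
    (measurableSet_le measurable_const continuous_cos.measurable).diff
      (measurableSet_le measurable_const (continuous_cos.comp (continuous_add_const δ)).measurable)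
  have hper : Function.Periodic (· ∈ D) (2 * π) := fun ψ => by
    simp only [D, mem_sdiff, mem_ofPred_eq, mem_preimage, add_right_comm ψ, cos_add_two_pi]
  have hshift : ({θ | c ≤ cos (θ - φ)} \ (· + δ) ⁻¹' {θ | c ≤ cos (θ - φ)}) ∩ Ioc s (s + 2 * π) =
      (· + -φ) ⁻¹' (D ∩ Ioc (s - φ) (s - φ + 2 * π)) := by
    ext θ
    simp only [D, mem_inter_iff, mem_sdiff, mem_ofPred_eq, mem_preimage, mem_Ioc, ← sub_eq_add_neg,
      sub_add_eq_add_sub, sub_le_sub_iff_right, sub_lt_sub_iff_right]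
  rw [hshift, measure_preimage_add_right,
    volume_inter_Ioc_eq_of_periodic two_pi_pos hD hper _ (-π), show -π + 2 * π = π by ring]
  exact volume_setOf_le_cos_diff_preimage_add_inter_Ioc_le c δ

lemma exists_mul_cos_sub_eq (a b : ℝ) :
    ∃ r φ : ℝ, 0 ≤ r ∧ ∀ θ, a * cos θ + b * sin θ = r * cos (θ - φ) := by
  set z : ℂ := ⟨a, b⟩
  refine ⟨‖z‖, z.arg, norm_nonneg z, fun θ => ?_⟩
  have hre : ‖z‖ * cos z.arg = a := Complex.norm_mul_cos_arg z
  have him : ‖z‖ * sin z.arg = b := Complex.norm_mul_sin_arg z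
  rw [cos_sub]
  linear_combination (-cos θ) * hre - sin θ * him

lemma volume_threshold_flip_inter_Ioc_le (a b q α : ℝ) :
    volume ({θ | ¬(q ≤ a * cos (θ + α) + b * sin (θ + α) ↔ q ≤ a * cos θ + b * sin θ)} ∩
      Ioc 0 (2 * π)) ≤ ENNReal.ofReal (2 * |α|) := by
  obtain ⟨r, φ, hr, hpolar⟩ := exists_mul_cos_sub_eq a b
  simp only [hpolar]
  rcases hr.eq_or_lt with rfl | hr
  · simp
  set A := {θ | q / r ≤ cos (θ - φ)}
  have hset : {θ | ¬(q ≤ r * cos (θ + α - φ) ↔ q ≤ r * cos (θ - φ))} =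
      symmDiff A ((· + α) ⁻¹' A) := by
    ext θ
    simp only [A, mem_symmDiff, mem_ofPred_eq, mem_preimage, div_le_iff₀' hr]
    tauto
  calc volume ({θ | ¬(q ≤ r * cos (θ + α - φ) ↔ q ≤ r * cos (θ - φ))} ∩ Ioc 0 (2 * π))
      ≤ ENNReal.ofReal |α| + ENNReal.ofReal |-α| := by
        rw [hset, ← zero_add (2 * π)]
        refine (volume_symmDiff_preimage_add_inter_Ioc_le A α 0 _).trans (add_le_add ?_ ?_)
        · exact volume_setOf_le_cos_sub_diff_preimage_add_inter_Ioc_le _ φ α 0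
        · exact volume_setOf_le_cos_sub_diff_preimage_add_inter_Ioc_le _ φ (-α) _
    _ = ENNReal.ofReal (2 * |α|) := by
        rw [abs_neg, ← ENNReal.ofReal_add (abs_nonneg α) (abs_nonneg α), two_mul]

lemma lintegral_measure_setOf_mem_eq {Θ X : Type*} [MeasurableSpace Θ] [MeasurableSpace X]
    (ν : Measure Θ) [SFinite ν] (μ : Measure X) [SFinite μ] {R : Θ → X → X}
    (hR : Measurable (Function.uncurry R)) (hpres : ∀ θ, MeasurePreserving (R θ) μ μ)
    {B : Set X} (hB : MeasurableSet B) :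
    ∫⁻ x, ν {θ | R θ x ∈ B} ∂μ = ν univ * μ B := by
  have hS : MeasurableSet {p : Θ × X | R p.1 p.2 ∈ B} := hR hB
  calc ∫⁻ x, ν {θ | R θ x ∈ B} ∂μ = ν.prod μ {p | R p.1 p.2 ∈ B} :=
        (Measure.prod_apply_symm hS).symm
    _ = ∫⁻ θ, μ (R θ ⁻¹' B) ∂ν := Measure.prod_apply hS
    _ = ν univ * μ B := by
        simp_rw [(hpres _).measure_preimage hB.nullMeasurableSet, lintegral_const, mul_comm]

section Rotation

variable {E : Type*} [NormedAddCommGroup E] [InnerProductSpace ℝ E]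

/-- For orthonormal `u, w`, the rotation by `θ` of the plane spanned by `u, w` (sending `u` to
`cos θ • u - sin θ • w`), extended by the identity on its orthogonal complement. -/
noncomputable def planeRotation (u w : E) (θ : ℝ) : E →ₗ[ℝ] E where
  toFun x := x + ((cos θ - 1) * ⟪u, x⟫ + sin θ * ⟪w, x⟫) • u +
    ((cos θ - 1) * ⟪w, x⟫ - sin θ * ⟪u, x⟫) • w
  map_add' x y := by
    simp only [inner_add_right]
    module
  map_smul' c x := by
    simp only [inner_smul_right, RingHom.id_apply]
    module

lemma planeRotation_apply (u w : E) (θ : ℝ) (x : E) :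
    planeRotation u w θ x = x + ((cos θ - 1) * ⟪u, x⟫ + sin θ * ⟪w, x⟫) • u +
      ((cos θ - 1) * ⟪w, x⟫ - sin θ * ⟪u, x⟫) • w :=
  rfl

lemma continuous_planeRotation (u w : E) :
    Continuous fun p : ℝ × E => planeRotation u w p.1 p.2 := by
  simp only [planeRotation_apply]
  fun_prop

variable {u w : E}

lemma inner_planeRotation_fst (hu : ‖u‖ = 1) (huw : ⟪u, w⟫ = 0) (θ : ℝ) (x : E) :
    ⟪u, planeRotation u w θ x⟫ = ⟪u, x⟫ * cos θ + ⟪w, x⟫ * sin θ := by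
  simp only [planeRotation_apply, inner_add_right, real_inner_smul_right,
    real_inner_self_eq_norm_sq, hu, huw]
  ring

lemma inner_planeRotation_snd (hw : ‖w‖ = 1) (huw : ⟪u, w⟫ = 0) (θ : ℝ) (x : E) :
    ⟪w, planeRotation u w θ x⟫ = ⟪w, x⟫ * cos θ - ⟪u, x⟫ * sin θ := by
  simp only [planeRotation_apply, inner_add_right, real_inner_smul_right,
    real_inner_self_eq_norm_sq, hw, real_inner_comm u w, huw]
  ring

lemma inner_cos_smul_add_sin_smul_planeRotation (hu : ‖u‖ = 1) (hw : ‖w‖ = 1) (huw : ⟪u, w⟫ = 0)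
    (α θ : ℝ) (x : E) :
    ⟪cos α • u + sin α • w, planeRotation u w θ x⟫ =
      ⟪u, x⟫ * cos (θ + α) + ⟪w, x⟫ * sin (θ + α) := by
  rw [inner_add_left, real_inner_smul_left, real_inner_smul_left, inner_planeRotation_fst hu huw,
    inner_planeRotation_snd hw huw, cos_add, sin_add]
  ring

lemma norm_planeRotation (hu : ‖u‖ = 1) (hw : ‖w‖ = 1) (huw : ⟪u, w⟫ = 0) (θ : ℝ) (x : E) :
    ‖planeRotation u w θ x‖ = ‖x‖ := by
  have hsq : ‖planeRotation u w θ x‖ ^ 2 = ‖x‖ ^ 2 := by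
    have huu : ⟪u, u⟫ = 1 := by rw [real_inner_self_eq_norm_sq, hu, one_pow]
    have hww : ⟪w, w⟫ = 1 := by rw [real_inner_self_eq_norm_sq, hw, one_pow]
    rw [← real_inner_self_eq_norm_sq, ← real_inner_self_eq_norm_sq]
    simp only [planeRotation_apply, inner_add_left, inner_add_right, real_inner_smul_left,
      real_inner_smul_right, huu, hww, huw, real_inner_comm u w, real_inner_comm u x,
      real_inner_comm w x]
    linear_combination (⟪u, x⟫ ^ 2 + ⟪w, x⟫ ^ 2) * sin_sq_add_cos_sq θ
  exact (pow_left_inj₀ (norm_nonneg _) (norm_nonneg _) two_ne_zero).1 hsq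

lemma exists_eq_cos_arccos_smul_add_sin_arccos_smul {v : E} (hu : ‖u‖ = 1) (hv : ‖v‖ = 1)
    (hd : v - ⟪u, v⟫ • u ≠ 0) :
    ∃ w : E, ‖w‖ = 1 ∧ ⟪u, w⟫ = 0 ∧ v = cos (arccos ⟪u, v⟫) • u + sin (arccos ⟪u, v⟫) • w := by
  set t := ⟪u, v⟫
  set d := v - t • u
  have huu : ⟪u, u⟫ = 1 := by rw [real_inner_self_eq_norm_sq, hu, one_pow]
  have hvv : ⟪v, v⟫ = 1 := by rw [real_inner_self_eq_norm_sq, hv, one_pow]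
  have hud : ⟪u, d⟫ = 0 := by simp only [d, inner_sub_right, real_inner_smul_right, huu, t]; ring
  have hdd : ‖d‖ ^ 2 = 1 - t ^ 2 := by
    rw [← real_inner_self_eq_norm_sq]
    simp only [d, inner_sub_left, inner_sub_right, real_inner_smul_left, real_inner_smul_right,
      huu, hvv, real_inner_comm u v, t]
    ring
  have ht : |t| ≤ 1 := by simpa [hu, hv] using abs_real_inner_le_norm u v
  have hsin : sin (arccos t) = ‖d‖ := by
    rw [sin_arccos, ← hdd, sqrt_sq (norm_nonneg d)]
  have hd0 : ‖d‖ ≠ 0 := norm_ne_zero_iff.2 hd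
  refine ⟨‖d‖⁻¹ • d, ?_, ?_, ?_⟩
  · rw [norm_smul, norm_inv, norm_norm, inv_mul_cancel₀ hd0]
  · rw [real_inner_smul_right, hud, mul_zero]
  · rw [cos_arccos (abs_le.1 ht).1 (abs_le.1 ht).2, hsin, smul_smul, mul_inv_cancel₀ hd0,
      one_smul, add_sub_cancel]

noncomputable def planeRotationEquiv [FiniteDimensional ℝ E] (hu : ‖u‖ = 1) (hw : ‖w‖ = 1)
    (huw : ⟪u, w⟫ = 0) (θ : ℝ) :
    E ≃ₗᵢ[ℝ] E :=
  LinearIsometry.toLinearIsometryEquiv ⟨planeRotation u w θ, norm_planeRotation hu hw huw θ⟩ rfl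

variable [MeasurableSpace E] [BorelSpace E]

lemma map_inner_eq_of_norm_eq (μ : Measure E) (hRI : ∀ e : E ≃ₗᵢ[ℝ] E, μ.map e = μ) {u' : E}
    (h : ‖u‖ = ‖u'‖) : μ.map (⟪u, ·⟫) = μ.map (⟪u', ·⟫) := by
  set e := Submodule.reflection (ℝ ∙ (u - u'))ᗮ
  have he : (⟪u', ·⟫) ∘ e = (⟪u, ·⟫) := funext fun x =>
    calc ⟪u', e x⟫ = ⟪e u, e x⟫ := by rw [Submodule.reflection_sub h]
      _ = ⟪u, x⟫ := e.inner_map_map u x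
  rw [← he, ← Measure.map_map (by fun_prop) e.continuous.measurable, hRI]

variable [FiniteDimensional ℝ E]

lemma measure_threshold_flip_le_of_eq_cos_smul_add_sin_smul (μ : Measure E)
    [IsProbabilityMeasure μ] (hRI : ∀ e : E ≃ₗᵢ[ℝ] E, μ.map e = μ) (hu : ‖u‖ = 1)
    (hw : ‖w‖ = 1) (huw : ⟪u, w⟫ = 0) (α q : ℝ) :
    μ {x | ¬(q ≤ ⟪cos α • u + sin α • w, x⟫ ↔ q ≤ ⟪u, x⟫)} ≤ ENNReal.ofReal (|α| / π) := by
  set B := {x | ¬(q ≤ ⟪cos α • u + sin α • w, x⟫ ↔ q ≤ ⟪u, x⟫)}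
  have hB : MeasurableSet B := by
    refine (Measurable.iff ?_ ?_).not.setOf <;>
      exact measurableSet_setOfPred.1 (measurableSet_le measurable_const (by fun_prop))
  set ν := volume.restrict (Ioc 0 (2 * π))
  have hslice : ∀ x, ν {θ | planeRotation u w θ x ∈ B} ≤ ENNReal.ofReal (2 * |α|) := fun x => by
    rw [Measure.restrict_apply' measurableSet_Ioc]
    simp only [B, mem_ofPred_eq, inner_cos_smul_add_sin_smul_planeRotation hu hw huw,
      inner_planeRotation_fst hu huw]
    exact volume_threshold_flip_inter_Ioc_le ⟪u, x⟫ ⟪w, x⟫ q α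
  have hpres : ∀ θ, MeasurePreserving (planeRotation u w θ) μ μ := fun θ =>
    ⟨(planeRotationEquiv hu hw huw θ).continuous.measurable, hRI (planeRotationEquiv hu hw huw θ)⟩
  have havg := lintegral_measure_setOf_mem_eq ν μ (R := fun θ => planeRotation u w θ)
    (continuous_planeRotation u w).measurable hpres hB
  have h2π : ENNReal.ofReal (2 * π) * μ B ≤ ENNReal.ofReal (2 * |α|) := by
    calc ENNReal.ofReal (2 * π) * μ B = ∫⁻ x, ν {θ | planeRotation u w θ x ∈ B} ∂μ := by
          rw [havg, Measure.restrict_apply_univ, volume_Ioc, sub_zero]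
      _ ≤ ∫⁻ _, ENNReal.ofReal (2 * |α|) ∂μ := lintegral_mono hslice
      _ = ENNReal.ofReal (2 * |α|) := by simp
  rw [← mul_div_mul_left |α| π two_ne_zero, ENNReal.ofReal_div_of_pos (by positivity),
    ENNReal.le_div_iff_mul_le (Or.inl (by simp [pi_pos])) (Or.inl ENNReal.ofReal_ne_top), mul_comm]
  exact h2π

lemma measure_threshold_flip_le_arccos (μ : Measure E) [IsProbabilityMeasure μ]
    (hRI : ∀ e : E ≃ₗᵢ[ℝ] E, μ.map e = μ) {v : E} (hu : ‖u‖ = 1) (hv : ‖v‖ = 1) (q : ℝ) :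
    μ {x | ¬(q ≤ ⟪v, x⟫ ↔ q ≤ ⟪u, x⟫)} ≤ ENNReal.ofReal (arccos ⟪u, v⟫ / π) := by
  by_cases hd : v - ⟪u, v⟫ • u = 0
  · have hvu : v = ⟪u, v⟫ • u := sub_eq_zero.1 hd
    have ht : |⟪u, v⟫| = 1 := by simpa [norm_smul, hu, hv] using congrArg norm hvu.symm
    rcases abs_eq zero_le_one |>.1 ht with h | h
    · have hvu' : v = u := by rw [hvu, h, one_smul]
      simp [hvu']
    · rw [h, arccos_neg_one, div_self pi_ne_zero, ENNReal.ofReal_one]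
      exact prob_le_one
  · obtain ⟨w, hw, huw, hvw⟩ := exists_eq_cos_arccos_smul_add_sin_arccos_smul hu hv hd
    conv_lhs => rw [hvw]
    simpa only [abs_of_nonneg (arccos_nonneg _)] using
      measure_threshold_flip_le_of_eq_cos_smul_add_sin_smul μ hRI hu hw huw (arccos ⟪u, v⟫) q

end Rotation

lemma measure_preimage_inner_eq_preimage_apply {n : ℕ} (μ : Measure (EuclideanSpace ℝ (Fin n)))
    (hRI : ∀ e : EuclideanSpace ℝ (Fin n) ≃ₗᵢ[ℝ] EuclideanSpace ℝ (Fin n), μ.map e = μ)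
    {u : EuclideanSpace ℝ (Fin n)} (hu : ‖u‖ = 1) (i : Fin n) {S : Set ℝ} (hS : MeasurableSet S) :
    μ ((⟪u, ·⟫) ⁻¹' S) = μ ((· i) ⁻¹' S) := by
  have hi : (⟪EuclideanSpace.single i (1 : ℝ), ·⟫) = (· i) := funext fun x => by
    simp [EuclideanSpace.inner_single_left]
  rw [← Measure.map_apply (by fun_prop) hS, map_inner_eq_of_norm_eq μ hRI (u' := .single i 1)
    (by simp [hu]), hi, Measure.map_apply (by fun_prop) hS]

lemma ite_ne_ite_iff (P Q : Prop) [Decidable P] [Decidable Q] :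
    ((if P then (1 : ℝ) else -1) ≠ if Q then 1 else -1) ↔ ¬(P ↔ Q) := by
  by_cases hP : P <;> by_cases hQ : Q <;> norm_num [hP, hQ]

theorem stmt_8 (n : ℕ) (hn : 0 < n) (μ : Measure (EuclideanSpace ℝ (Fin n)))
    [IsProbabilityMeasure μ]
    (hRI : ∀ e : EuclideanSpace ℝ (Fin n) ≃ₗᵢ[ℝ] EuclideanSpace ℝ (Fin n), μ.map e = μ)
    (u v : EuclideanSpace ℝ (Fin n)) (hu : ‖u‖ = 1) (hv : ‖v‖ = 1) (p q : ℝ) :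
    (μ {x | (if q ≤ ⟪v, x⟫ then (1 : ℝ) else -1) ≠ (if p ≤ ⟪u, x⟫ then (1 : ℝ) else -1)}).toReal ≤
      Real.arccos ⟪u, v⟫ / Real.pi +
        (μ {x | (if p ≤ x ⟨0, hn⟩ then (1 : ℝ) else -1) ≠
            (if q ≤ x ⟨0, hn⟩ then (1 : ℝ) else -1)}).toReal := by
  simp only [ite_ne_ite_iff]
  have hcoord : μ {x | ¬(q ≤ ⟪u, x⟫ ↔ p ≤ ⟪u, x⟫)} = μ {x | ¬(p ≤ x ⟨0, hn⟩ ↔ q ≤ x ⟨0, hn⟩)} := by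
    simpa only [preimage_ofPred_eq, mem_Ici, iff_comm (a := p ≤ _)] using
      measure_preimage_inner_eq_preimage_apply μ hRI hu ⟨0, hn⟩
        (measurableSet_Ici.mem.iff measurableSet_Ici.mem).not.setOf
  have hsplit : {x | ¬(q ≤ ⟪v, x⟫ ↔ p ≤ ⟪u, x⟫)} ⊆
      {x | ¬(q ≤ ⟪v, x⟫ ↔ q ≤ ⟪u, x⟫)} ∪ {x | ¬(q ≤ ⟪u, x⟫ ↔ p ≤ ⟪u, x⟫)} := fun x => by
    simp only [mem_union, mem_ofPred_eq]; tauto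
  calc (μ {x | ¬(q ≤ ⟪v, x⟫ ↔ p ≤ ⟪u, x⟫)}).toReal
      ≤ (μ {x | ¬(q ≤ ⟪v, x⟫ ↔ q ≤ ⟪u, x⟫)}).toReal +
          (μ {x | ¬(q ≤ ⟪u, x⟫ ↔ p ≤ ⟪u, x⟫)}).toReal :=
        (measureReal_mono hsplit).trans (measureReal_union_le _ _)
    _ ≤ arccos ⟪u, v⟫ / π + (μ {x | ¬(p ≤ x ⟨0, hn⟩ ↔ q ≤ x ⟨0, hn⟩)}).toReal := by
        rw [hcoord]
        gcongr
        exact ENNReal.toReal_le_of_le_ofReal (div_nonneg (arccos_nonneg _) pi_pos.le)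
          (measure_threshold_flip_le_arccos μ hRI hu hv q)
end

section
/- Let σ be the uniform distribution on the sphere of radius √n in ℝ^n (n ≥ 4), h a halfspace with unit normal w, and f : ℝ^n → {-1,1} with dist_σ(f,h) = ε ∈ (0,1/2). Then ‖E[x·h(x)]‖ − ‖E[x·f(x)]‖ ≤ K·ε·√(ln(1/ε)) for some universal constant K. -/
open MeasureTheory Module Real
open scoped RealInnerProductSpace

/-!
Put `v = E[x (h - f)]` and `u = v / ‖v‖`. Then `‖E[x h]‖ - ‖E[x f]‖ ≤ ⟪u, v⟫`, and since
`h - f` vanishes off the disagreement set `S` (of measure `ε`) and is at most `2` in absolute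
value, `⟪u, v⟫ ≤ 2 ∫_S |⟪u, x⟫|`.

Rotation invariance makes `θ ↦ E⟪cos θ • u + sin θ • v', x⟫ ^ m` constant for orthonormal
`u, v'`; its second derivative at `0` gives `E⟪u, x⟫ ^ (2k+2) = (2k+1) E[⟪u, x⟫ ^ 2k ⟪v', x⟫ ^ 2]`.
Summing over an orthonormal basis of `uᗮ` and using `‖x‖ ^ 2 = n` yields the sub-Gaussian
moment bound `E⟪u, x⟫ ^ 2k ≤ (3k) ^ k`. With `k = ⌈log (1/ε)⌉` and the elementary
`T ^ (2k-1) |y| ≤ T ^ 2k + |y| ^ 2k` for `T ^ 2 = 3ek`, the integral over `S` is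
`O(ε √(log (1/ε)))`.
-/

lemma integral_eq_zero_of_hasDerivAt_of_integral_const {α : Type*} [MeasurableSpace α]
    {μ : Measure α} [IsFiniteMeasure μ] {F F' : ℝ → α → ℝ} {B C : ℝ}
    (hF : ∀ θ, Integrable (F θ) μ) (hF' : ∀ θ, AEStronglyMeasurable (F' θ) μ)
    (hbound : ∀ᵐ x ∂μ, ∀ θ, |F' θ x| ≤ B) (hderiv : ∀ x θ, HasDerivAt (F · x) (F' θ x) θ)
    (hconst : ∀ θ, ∫ x, F θ x ∂μ = C) (θ₀ : ℝ) : ∫ x, F' θ₀ x ∂μ = 0 := by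
  obtain ⟨-, hd⟩ := hasDerivAt_integral_of_dominated_loc_of_deriv_le (bound := fun _ ↦ B)
    Filter.univ_mem (.of_forall fun θ ↦ (hF θ).aestronglyMeasurable) (hF θ₀) (hF' θ₀)
    (by filter_upwards [hbound] with x hx θ _ using (hx θ)) (integrable_const B)
    (.of_forall fun x θ _ ↦ hderiv x θ)
  rw [funext hconst] at hd
  exact hd.unique (hasDerivAt_const θ₀ C)

lemma pow_mul_abs_le_pow_succ_add {T : ℝ} (hT : 0 ≤ T) (y : ℝ) (m : ℕ) :
    T ^ m * |y| ≤ T ^ (m + 1) + |y| ^ (m + 1) := by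
  rw [pow_succ, pow_succ]
  rcases le_total |y| T with h | h
  · linarith [mul_le_mul_of_nonneg_left h (pow_nonneg hT m),
      mul_nonneg (pow_nonneg (abs_nonneg y) m) (abs_nonneg y)]
  · linarith [mul_le_mul_of_nonneg_right (pow_le_pow_left₀ hT h m) (abs_nonneg y),
      mul_nonneg (pow_nonneg hT m) hT]

lemma setIntegral_abs_le_of_integral_abs_pow_le {α : Type*} [MeasurableSpace α]
    {μ : Measure α} [IsFiniteMeasure μ] {S : Set α} {g : α → ℝ} {m : ℕ} (hg : Integrable g μ)
    (hgm : Integrable (fun x ↦ |g x| ^ (m + 1)) μ) {T : ℝ} (hT : 0 < T)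
    (hmoment : ∫ x, |g x| ^ (m + 1) ∂μ ≤ μ.real S * T ^ (m + 1)) :
    ∫ x in S, |g x| ∂μ ≤ 2 * μ.real S * T := by
  refine le_of_mul_le_mul_left ?_ (pow_pos hT m)
  calc T ^ m * ∫ x in S, |g x| ∂μ = ∫ x in S, T ^ m * |g x| ∂μ := (integral_const_mul _ _).symm
    _ ≤ ∫ x in S, (T ^ (m + 1) + |g x| ^ (m + 1)) ∂μ :=
      setIntegral_mono (hg.abs.const_mul _).integrableOn
        ((integrable_const _).add hgm).integrableOn
        fun x ↦ pow_mul_abs_le_pow_succ_add hT.le _ m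
    _ = μ.real S * T ^ (m + 1) + ∫ x in S, |g x| ^ (m + 1) ∂μ := by
      rw [integral_add (integrable_const _) hgm.integrableOn, setIntegral_const, smul_eq_mul]
    _ ≤ μ.real S * T ^ (m + 1) + ∫ x, |g x| ^ (m + 1) ∂μ :=
      add_le_add le_rfl (setIntegral_le_integral hgm (.of_forall fun x ↦ by positivity))
    _ ≤ T ^ m * (2 * μ.real S * T) := by rw [pow_succ] at hmoment ⊢; linarith

lemma Continuous.integrable_of_ae_norm_le {E : Type*} [NormedAddCommGroup E] [NormedSpace ℝ E]
    [FiniteDimensional ℝ E] [MeasurableSpace E] [BorelSpace E] {μ : Measure E}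
    [IsFiniteMeasure μ] {g : E → ℝ} (hg : Continuous g) {R : ℝ} (hR : ∀ᵐ x ∂μ, ‖x‖ ≤ R) :
    Integrable g μ := by
  rw [← Measure.restrict_eq_self_of_ae_mem (μ := μ) (s := Metric.closedBall 0 R)
    (by simpa using hR)]
  exact hg.continuousOn.integrableOn_compact (isCompact_closedBall 0 R)

lemma exists_norm_eq_one_inner_eq_norm {E : Type*} [NormedAddCommGroup E] [InnerProductSpace ℝ E]
    [Nontrivial E] (v : E) : ∃ u : E, ‖u‖ = 1 ∧ ⟪u, v⟫ = ‖v‖ := by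
  rcases eq_or_ne v 0 with rfl | hv
  · obtain ⟨u, hu⟩ := exists_norm_eq E zero_le_one
    exact ⟨u, hu, by simp⟩
  · refine ⟨‖v‖⁻¹ • v, by simp [norm_smul, hv], ?_⟩
    rw [real_inner_smul_left, real_inner_self_eq_norm_sq]
    field_simp

section RotationInvariant

variable {E : Type*} [NormedAddCommGroup E] [InnerProductSpace ℝ E]

noncomputable def circlePoint (u v : E) (θ : ℝ) : E := cos θ • u + sin θ • v

section CirclePoint

variable {u v : E}

lemma norm_circlePoint (hu : ‖u‖ = 1) (hv : ‖v‖ = 1) (huv : ⟪u, v⟫ = 0) (θ : ℝ) :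
    ‖circlePoint u v θ‖ = 1 := by
  have h : ‖circlePoint u v θ‖ ^ 2 = 1 ^ 2 := by
    rw [circlePoint, norm_add_sq_real, real_inner_smul_left, real_inner_smul_right, huv,
      norm_smul, norm_smul, hu, hv, Real.norm_eq_abs, Real.norm_eq_abs]
    nlinarith [cos_sq_add_sin_sq θ, sq_abs (cos θ), sq_abs (sin θ)]
  exact (sq_eq_sq₀ (norm_nonneg _) zero_le_one).1 h

lemma circlePoint_zero : circlePoint u v 0 = u := by simp [circlePoint]

lemma circlePoint_pi_div_two : circlePoint u v (π / 2) = v := by simp [circlePoint]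

lemma circlePoint_add_pi (θ : ℝ) : circlePoint u v (θ + π) = -circlePoint u v θ := by
  simp only [circlePoint, cos_add_pi, sin_add_pi, neg_smul, neg_add]

lemma hasDerivAt_inner_circlePoint (x : E) (θ : ℝ) :
    HasDerivAt (fun θ ↦ ⟪circlePoint u v θ, x⟫) ⟪circlePoint u v (θ + π / 2), x⟫ θ := by
  simp only [circlePoint, inner_add_left, real_inner_smul_left, cos_add_pi_div_two,
    sin_add_pi_div_two]
  exact ((hasDerivAt_cos θ).mul_const ⟪u, x⟫).fun_add ((hasDerivAt_sin θ).mul_const ⟪v, x⟫)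

end CirclePoint

variable [MeasurableSpace E] [BorelSpace E]

def IsRotationInvariant (μ : Measure E) : Prop :=
  ∀ e : E ≃ₗᵢ[ℝ] E, μ.map e = μ

lemma IsRotationInvariant.integral_comp {μ : Measure E} (hμ : IsRotationInvariant μ)
    (e : E ≃ₗᵢ[ℝ] E) (g : E → ℝ) : ∫ x, g (e x) ∂μ = ∫ x, g x ∂μ := by
  conv_rhs => rw [← hμ e]
  exact (e.toHomeomorph.measurableEmbedding.integral_map g).symm

lemma IsRotationInvariant.integral_comp_inner {μ : Measure E} (hμ : IsRotationInvariant μ)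
    {u v : E} (hu : ‖u‖ = 1) (hv : ‖v‖ = 1) (G : ℝ → ℝ) :
    ∫ x, G ⟪u, x⟫ ∂μ = ∫ x, G ⟪v, x⟫ ∂μ := by
  set e := (ℝ ∙ (v - u))ᗮ.reflection
  have hev : e v = u := Submodule.reflection_sub (hv.trans hu.symm)
  rw [← hμ.integral_comp e]
  simp_rw [← hev, LinearIsometryEquiv.inner_map_map]

variable [FiniteDimensional ℝ E] {μ : Measure E} [IsFiniteMeasure μ] {R : ℝ}

lemma integral_inner_pow_add_two (hμ : IsRotationInvariant μ) (hR : ∀ᵐ x ∂μ, ‖x‖ ≤ R)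
    {u v : E} (hu : ‖u‖ = 1) (hv : ‖v‖ = 1) (huv : ⟪u, v⟫ = 0) (j : ℕ) :
    ∫ x, ⟪u, x⟫ ^ (j + 2) ∂μ = (j + 1) * ∫ x, ⟪u, x⟫ ^ j * ⟪v, x⟫ ^ 2 ∂μ := by
  set P : ℝ → E → ℝ := fun θ x ↦ ⟪circlePoint u v θ, x⟫
  set Q : ℝ → E → ℝ := fun θ ↦ P (θ + π / 2)
  have hPd : ∀ x θ, HasDerivAt (P · x) (Q θ x) θ := fun x θ ↦ hasDerivAt_inner_circlePoint x θ
  have hQd : ∀ x θ, HasDerivAt (Q · x) (-P θ x) θ := fun x θ ↦ by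
    simpa [P, Q, add_assoc, circlePoint_add_pi] using (hPd x (θ + π / 2)).comp_add_const θ (π / 2)
  have hPc : ∀ θ, Continuous (P θ) := fun θ ↦ continuous_const.inner continuous_id
  have hPb : ∀ᵐ x ∂μ, ∀ θ, |P θ x| ≤ R := by
    filter_upwards [hR] with x hx θ
    calc |P θ x| ≤ ‖circlePoint u v θ‖ * ‖x‖ := abs_real_inner_le_norm _ _
      _ ≤ R := by rwa [norm_circlePoint hu hv huv, one_mul]
  have hfirst : ∀ θ, ∫ x, P θ x ^ (j + 1) * Q θ x ∂μ = 0 := by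
    intro θ
    have h := integral_eq_zero_of_hasDerivAt_of_integral_const (F := fun θ x ↦ P θ x ^ (j + 2))
      (F' := fun θ x ↦ (j + 2 : ℝ) * (P θ x ^ (j + 1) * Q θ x)) (B := (j + 2) * (R ^ (j + 1) * R))
      (fun θ ↦ ((hPc θ).pow _).integrable_of_ae_norm_le hR)
      (fun θ ↦ (continuous_const.mul (((hPc θ).pow _).mul (hPc _))).aestronglyMeasurable)
      (by
        filter_upwards [hPb] with x hx θ
        have h0 : 0 ≤ R := (abs_nonneg _).trans (hx θ)
        rw [abs_mul, abs_mul, abs_pow, abs_of_nonneg (by positivity : (0 : ℝ) ≤ j + 2)]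
        gcongr
        exacts [hx θ, hx _])
      (fun x θ ↦ ((hPd x θ).fun_pow (j + 2)).congr_deriv (by push_cast; ring))
      (fun θ ↦ hμ.integral_comp_inner (norm_circlePoint hu hv huv θ) hu (· ^ (j + 2))) θ
    rwa [integral_const_mul, mul_eq_zero, or_iff_right (by positivity)] at h
  have hsecond := integral_eq_zero_of_hasDerivAt_of_integral_const
      (F := fun θ x ↦ P θ x ^ (j + 1) * Q θ x)
      (F' := fun θ x ↦ (j + 1) * (P θ x ^ j * Q θ x ^ 2) - P θ x ^ (j + 2))
      (B := (j + 1) * (R ^ j * R ^ 2) + R ^ (j + 2))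
      (fun θ ↦ (((hPc θ).pow _).mul (hPc _)).integrable_of_ae_norm_le hR)
      (fun θ ↦ ((continuous_const.mul (((hPc θ).pow _).mul ((hPc _).pow 2))).sub
        ((hPc θ).pow _)).aestronglyMeasurable)
      (by
        filter_upwards [hPb] with x hx θ
        have h0 : 0 ≤ R := (abs_nonneg _).trans (hx θ)
        refine (abs_sub _ _).trans ?_
        rw [abs_mul, abs_mul, abs_pow, abs_pow, abs_pow,
          abs_of_nonneg (by positivity : (0 : ℝ) ≤ j + 1)]
        gcongr
        exacts [hx θ, hx _, hx θ])
      (fun x θ ↦ (((hPd x θ).fun_pow (j + 1)).fun_mul (hQd x θ)).congr_deriv (by push_cast; ring))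
      hfirst 0
  simp only [P, Q, zero_add, circlePoint_zero, circlePoint_pi_div_two] at hsecond
  rw [integral_sub (Continuous.integrable_of_ae_norm_le (by fun_prop) hR)
    (Continuous.integrable_of_ae_norm_le (by fun_prop) hR), integral_const_mul] at hsecond
  linarith

lemma finrank_sub_one_mul_integral_inner_pow_le (hμ : IsRotationInvariant μ)
    (hR : ∀ᵐ x ∂μ, ‖x‖ ≤ R) {u : E} (hu : ‖u‖ = 1) (k : ℕ) :
    ((finrank ℝ E : ℝ) - 1) * ∫ x, ⟪u, x⟫ ^ (2 * k + 2) ∂μ ≤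
      (2 * k + 1) * R ^ 2 * ∫ x, ⟪u, x⟫ ^ (2 * k) ∂μ := by
  set b := stdOrthonormalBasis ℝ (ℝ ∙ u)ᗮ
  set v : Fin (finrank ℝ (ℝ ∙ u)ᗮ) → E := fun i ↦ b i
  have hv : Orthonormal ℝ v := b.orthonormal.comp_linearIsometry (ℝ ∙ u)ᗮ.subtypeₗᵢ
  have huv : ∀ i, ⟪u, v i⟫ = 0 := fun i ↦
    Submodule.mem_orthogonal_singleton_iff_inner_right.mp (b i).2
  have hdim : (finrank ℝ (ℝ ∙ u)ᗮ : ℝ) = finrank ℝ E - 1 := by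
    have h := Submodule.finrank_add_finrank_orthogonal (ℝ ∙ u)
    rw [finrank_span_singleton (norm_ne_zero_iff.mp (by simp [hu]))] at h
    rw [← h]; push_cast; ring
  have hbessel : ∀ᵐ x ∂μ, ∑ i, ⟪v i, x⟫ ^ 2 ≤ R ^ 2 := by
    filter_upwards [hR] with x hx
    have h := hv.sum_inner_products_le x (s := Finset.univ)
    simp only [Real.norm_eq_abs, sq_abs] at h
    exact h.trans (pow_le_pow_left₀ (norm_nonneg x) hx 2)
  have hpow : ∀ x, 0 ≤ ⟪u, x⟫ ^ (2 * k) := fun x ↦ (even_two_mul k).pow_nonneg _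
  calc ((finrank ℝ E : ℝ) - 1) * ∫ x, ⟪u, x⟫ ^ (2 * k + 2) ∂μ
      = ∑ i, (2 * k + 1) * ∫ x, ⟪u, x⟫ ^ (2 * k) * ⟪v i, x⟫ ^ 2 ∂μ := by
        have h i := integral_inner_pow_add_two hμ hR hu (hv.1 i) (huv i) (2 * k)
        push_cast at h
        rw [Finset.sum_congr rfl fun i _ ↦ (h i).symm, Finset.sum_const, Finset.card_univ,
          Fintype.card_fin, nsmul_eq_mul, hdim]
    _ = (2 * k + 1) * ∫ x, ⟪u, x⟫ ^ (2 * k) * ∑ i, ⟪v i, x⟫ ^ 2 ∂μ := by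
        simp_rw [Finset.mul_sum]
        rw [integral_finsetSum _ fun i _ ↦ Continuous.integrable_of_ae_norm_le (by fun_prop) hR,
          Finset.mul_sum]
    _ ≤ (2 * k + 1) * ∫ x, ⟪u, x⟫ ^ (2 * k) * R ^ 2 ∂μ := by
        refine mul_le_mul_of_nonneg_left (integral_mono_ae ?_ ?_ ?_) (by positivity)
        · exact Continuous.integrable_of_ae_norm_le (by fun_prop) hR
        · exact Continuous.integrable_of_ae_norm_le (by fun_prop) hR
        · filter_upwards [hbessel] with x hx
          exact mul_le_mul_of_nonneg_left hx (hpow x)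
    _ = (2 * k + 1) * R ^ 2 * ∫ x, ⟪u, x⟫ ^ (2 * k) ∂μ := by
        rw [integral_mul_const]; ring

lemma integral_inner_pow_two_mul_le [IsProbabilityMeasure μ] (hμ : IsRotationInvariant μ)
    (hR : ∀ᵐ x ∂μ, ‖x‖ ≤ R) (hd : 1 < finrank ℝ E)
    (hRd : 3 * R ^ 2 ≤ 4 * ((finrank ℝ E : ℝ) - 1)) {u : E} (hu : ‖u‖ = 1) (k : ℕ) :
    ∫ x, ⟪u, x⟫ ^ (2 * k) ∂μ ≤ (3 * k) ^ k := by
  induction k with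
  | zero => simp
  | succ k ih =>
    have hd' : 0 < (finrank ℝ E : ℝ) - 1 := by
      have : (1 : ℝ) < finrank ℝ E := by exact_mod_cast hd
      linarith
    have hM : 0 ≤ ∫ x, ⟪u, x⟫ ^ (2 * k) ∂μ :=
      integral_nonneg fun x ↦ (even_two_mul k).pow_nonneg _
    have hstep : ∫ x, ⟪u, x⟫ ^ (2 * k + 2) ∂μ ≤ 3 * (k + 1) * ∫ x, ⟪u, x⟫ ^ (2 * k) ∂μ := by
      refine le_of_mul_le_mul_left ?_ hd'
      refine (finrank_sub_one_mul_integral_inner_pow_le hμ hR hu k).trans ?_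
      have hkM : 0 ≤ (2 * k + 1) * ∫ x, ⟪u, x⟫ ^ (2 * k) ∂μ := by positivity
      nlinarith [mul_le_mul_of_nonneg_right hRd hkM,
        mul_nonneg (mul_nonneg hd'.le hM) (by linarith : (0 : ℝ) ≤ k + 5)]
    calc ∫ x, ⟪u, x⟫ ^ (2 * (k + 1)) ∂μ ≤ 3 * (k + 1) * ∫ x, ⟪u, x⟫ ^ (2 * k) ∂μ := hstep
      _ ≤ 3 * (k + 1) * (3 * (k + 1)) ^ k := by
        gcongr
        exact ih.trans (pow_le_pow_left₀ (by positivity) (by linarith) k)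
      _ = (3 * ((k + 1 : ℕ) : ℝ)) ^ (k + 1) := by push_cast; ring

lemma setIntegral_abs_inner_le [IsProbabilityMeasure μ] (hμ : IsRotationInvariant μ)
    (hR : ∀ᵐ x ∂μ, ‖x‖ ≤ R) (hd : 1 < finrank ℝ E)
    (hRd : 3 * R ^ 2 ≤ 4 * ((finrank ℝ E : ℝ) - 1)) {u : E} (hu : ‖u‖ = 1) {S : Set E} {ε : ℝ}
    (hε : ε ∈ Set.Ioo 0 (1 / 2)) (hS : μ.real S = ε) :
    ∫ x in S, |⟪u, x⟫| ∂μ ≤ 10 * ε * √(log (1 / ε)) := by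
  obtain ⟨hε0, hε2⟩ := hε
  set L := log (1 / ε)
  have hL : 1 / 2 < L := by
    have h2 : log 2 < L := log_lt_log two_pos (by rw [lt_div_iff₀ hε0]; linarith)
    linarith [log_two_gt_d9]
  obtain ⟨j, hj⟩ : ∃ j, ⌈L⌉₊ = j + 1 :=
    Nat.exists_eq_add_one.mpr (Nat.ceil_pos.mpr (by linarith))
  have hLj : L ≤ j + 1 := by exact_mod_cast hj ▸ Nat.le_ceil L
  have hjL : (j : ℝ) + 1 ≤ 3 * L := by
    have := Nat.ceil_lt_add_one (by linarith : 0 ≤ L)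
    rw [hj] at this; push_cast at this; linarith
  -- `T ^ (2 (j + 1)) = (3 (j + 1)) ^ (j + 1) e ^ (j + 1)` beats the moment bound by the factor
  -- `e ^ (j + 1) ≥ e ^ L = 1 / ε`.
  set T := √(3 * exp 1 * (j + 1))
  have hT : 0 < T := sqrt_pos.mpr (by positivity)
  have hmoment : ∫ x, |⟪u, x⟫| ^ (2 * j + 1 + 1) ∂μ ≤ ε * T ^ (2 * j + 1 + 1) := by
    have he : exp (j + 1) = exp 1 ^ (j + 1) := by exact_mod_cast (exp_one_pow (j + 1)).symm
    have hexp : 1 ≤ ε * exp (j + 1) := by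
      calc 1 = ε * exp L := by rw [exp_log (by positivity)]; field_simp
        _ ≤ ε * exp (j + 1) := by gcongr
    have hpos : (0 : ℝ) ≤ (3 * ((j + 1 : ℕ) : ℝ)) ^ (j + 1) := by positivity
    simp_rw [show 2 * j + 1 + 1 = 2 * (j + 1) by ring, (even_two_mul (j + 1)).pow_abs]
    rw [pow_mul, sq_sqrt (by positivity), show 3 * exp 1 * (j + 1) = 3 * (j + 1) * exp 1 by ring,
      mul_pow, ← he]
    calc ∫ x, ⟪u, x⟫ ^ (2 * (j + 1)) ∂μ ≤ (3 * ((j + 1 : ℕ) : ℝ)) ^ (j + 1) :=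
          integral_inner_pow_two_mul_le hμ hR hd hRd hu (j + 1)
      _ ≤ ε * ((3 * (j + 1)) ^ (j + 1) * exp (j + 1)) := by push_cast at hpos ⊢; nlinarith
  have hT5 : T ≤ 5 * √L := by
    rw [show (5 : ℝ) = √(5 ^ 2) by rw [sqrt_sq (by norm_num)], ← sqrt_mul (by norm_num)]
    exact sqrt_le_sqrt (by nlinarith [exp_one_lt_d9])
  calc ∫ x in S, |⟪u, x⟫| ∂μ ≤ 2 * ε * T := by
        rw [← hS] at hmoment ⊢
        exact setIntegral_abs_le_of_integral_abs_pow_le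
          (Continuous.integrable_of_ae_norm_le (by fun_prop) hR)
          (Continuous.integrable_of_ae_norm_le (by fun_prop) hR) hT hmoment
    _ ≤ 2 * ε * (5 * √L) := by gcongr
    _ = 10 * ε * √L := by ring

theorem norm_integral_smul_sub_norm_integral_smul_le [IsProbabilityMeasure μ]
    (hμ : IsRotationInvariant μ) (hR : ∀ᵐ x ∂μ, ‖x‖ ≤ R) (hd : 1 < finrank ℝ E)
    (hRd : 3 * R ^ 2 ≤ 4 * ((finrank ℝ E : ℝ) - 1)) {g₁ g₂ : E → ℝ} (hg₁ : Measurable g₁)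
    (hg₂ : Measurable g₂) (hg₁1 : ∀ x, |g₁ x| ≤ 1) (hg₂1 : ∀ x, |g₂ x| ≤ 1) {ε : ℝ}
    (hε : ε ∈ Set.Ioo 0 (1 / 2)) (hdist : μ.real {x | g₂ x ≠ g₁ x} = ε) :
    ‖∫ x, g₁ x • x ∂μ‖ - ‖∫ x, g₂ x • x ∂μ‖ ≤ 20 * ε * √(log (1 / ε)) := by
  have hint (g : E → ℝ) (hg : Measurable g) (hg1 : ∀ x, |g x| ≤ 1) :
      Integrable (fun x ↦ g x • x) μ :=
    (Integrable.of_bound aestronglyMeasurable_id R hR).bdd_smul 1 hg.aestronglyMeasurable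
      (.of_forall fun x ↦ by simpa using hg1 x)
  have : Nontrivial E := Module.nontrivial_of_finrank_pos (R := ℝ) (by omega)
  obtain ⟨u, hu, hnorm⟩ :=
    exists_norm_eq_one_inner_eq_norm (∫ x, g₁ x • x ∂μ - ∫ x, g₂ x • x ∂μ)
  have hdiff (x : E) : (g₁ x - g₂ x) * ⟪u, x⟫ ≤ 2 * |⟪u, x⟫| := by
    refine (le_abs_self _).trans ?_
    rw [abs_mul]
    gcongr
    linarith [abs_sub (g₁ x) (g₂ x), hg₁1 x, hg₂1 x]
  have hprod : Integrable (fun x ↦ (g₁ x - g₂ x) * ⟪u, x⟫) μ :=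
    (Continuous.integrable_of_ae_norm_le (by fun_prop) hR).bdd_mul
      (hg₁.sub hg₂).aestronglyMeasurable (c := 2) (.of_forall fun x ↦ by
        simpa using (abs_sub (g₁ x) (g₂ x)).trans (by linarith [hg₁1 x, hg₂1 x]))
  calc ‖∫ x, g₁ x • x ∂μ‖ - ‖∫ x, g₂ x • x ∂μ‖
      ≤ ‖∫ x, g₁ x • x ∂μ - ∫ x, g₂ x • x ∂μ‖ := norm_sub_norm_le _ _
    _ = ∫ x, (g₁ x - g₂ x) * ⟪u, x⟫ ∂μ := by
      have hsub : Integrable (fun x ↦ g₁ x • x - g₂ x • x) μ :=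
        (hint g₁ hg₁ hg₁1).sub (hint g₂ hg₂ hg₂1)
      rw [← hnorm, ← integral_sub (hint g₁ hg₁ hg₁1) (hint g₂ hg₂ hg₂1), ← integral_inner hsub]
      simp only [← sub_smul, real_inner_smul_right]
    _ = ∫ x in {x | g₂ x ≠ g₁ x}, (g₁ x - g₂ x) * ⟪u, x⟫ ∂μ := by
      refine (setIntegral_eq_integral_of_forall_compl_eq_zero fun x hx ↦ ?_).symm
      rw [not_not.mp hx, sub_self, zero_mul]
    _ ≤ ∫ x in {x | g₂ x ≠ g₁ x}, 2 * |⟪u, x⟫| ∂μ :=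
      setIntegral_mono hprod.integrableOn
        ((Continuous.integrable_of_ae_norm_le (by fun_prop) hR).integrableOn) hdiff
    _ ≤ 2 * (10 * ε * √(log (1 / ε))) := by
      rw [integral_const_mul]
      gcongr
      exact setIntegral_abs_inner_le hμ hR hd hRd hu hε hdist
    _ = 20 * ε * √(log (1 / ε)) := by ring

end RotationInvariant

theorem stmt_15 :
    ∃ K : ℝ, 0 < K ∧
      ∀ (n : ℕ), 4 ≤ n →
      ∀ σ : Measure (EuclideanSpace ℝ (Fin n)), IsProbabilityMeasure σ →
        (∀ e : EuclideanSpace ℝ (Fin n) ≃ₗᵢ[ℝ] EuclideanSpace ℝ (Fin n), σ.map e = σ) →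
        σ {x | ‖x‖ = Real.sqrt n} = 1 →
        ∀ (w : EuclideanSpace ℝ (Fin n)), ‖w‖ = 1 → ∀ t : ℝ,
        ∀ f : EuclideanSpace ℝ (Fin n) → ℝ, Measurable f →
          (∀ x, f x = 1 ∨ f x = -1) →
        ∀ ε : ℝ, ε ∈ Set.Ioo (0 : ℝ) (1 / 2) →
          (σ {x | f x ≠ (if t ≤ ⟪w, x⟫ then (1 : ℝ) else -1)}).toReal = ε →
          ‖∫ x, (if t ≤ ⟪w, x⟫ then (1 : ℝ) else -1) • x ∂σ‖ - ‖∫ x, f x • x ∂σ‖ ≤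
            K * ε * Real.sqrt (Real.log (1 / ε)) := by
  refine ⟨20, by norm_num, fun n hn σ _ hσ hsphere w _ t f hf hf1 ε hε hdist ↦ ?_⟩
  have hR : ∀ᵐ x ∂σ, ‖x‖ ≤ √n := by
    have hmeas : MeasurableSet {x : EuclideanSpace ℝ (Fin n) | ‖x‖ = √n} :=
      measurableSet_eq_fun measurable_norm measurable_const
    filter_upwards [(ae_iff_measure_eq hmeas.nullMeasurableSet).2 (by rw [hsphere, measure_univ])]
      with x hx using hx.le
  have hRd : 3 * √n ^ 2 ≤ 4 * ((finrank ℝ (EuclideanSpace ℝ (Fin n)) : ℝ) - 1) := by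
    rw [finrank_euclideanSpace_fin, sq_sqrt n.cast_nonneg]
    have : (4 : ℝ) ≤ n := by exact_mod_cast hn
    linarith
  have hhalf : Measurable fun x : EuclideanSpace ℝ (Fin n) ↦ if t ≤ ⟪w, x⟫ then (1 : ℝ) else -1 :=
    .ite (measurableSet_le measurable_const (by fun_prop)) measurable_const measurable_const
  exact norm_integral_smul_sub_norm_integral_smul_le hσ hR
    (by rw [finrank_euclideanSpace_fin]; omega) hRd hhalf hf (fun x ↦ by split_ifs <;> simp)
    (fun x ↦ by rcases hf1 x with h | h <;> simp [h]) hε hdist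
end

section
/- Let μ be a probability distribution on a space X partitioned into sets R₁,…,R_k, let m₁,…,m_k ≥ 0 with m = max_i mᵢ ≥ (k/ε)·ln(2k/δ), and let X be a sample of M = (2k/ε)·m i.i.d. draws from μ. Let A = {i : #(X ∩ Rᵢ) < mᵢ}. Then with probability at least 1−δ, Σ_{i∈A} μ(Rᵢ) < ε. -/
/-! If `μ(Rᵢ) ≥ ε / k`, the number of sample points in `Rᵢ` is a sum of `M` independent
indicators with mean `M μ(Rᵢ) ≥ 2 m`, so by Hoeffding it drops below `mᵢ ≤ m` with probability
at most `exp (-2 m² / M) = exp (-ε m / k) ≤ δ / (2k)`. A union bound over these heavy parts shows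
that with probability at least `1 - δ` every undersampled part has measure `< ε / k`, and at most
`k` such parts have total measure `< ε`. -/

open MeasureTheory ProbabilityTheory Real
open scoped Classical

lemma hasSubgaussianMGF_measureReal_sub_indicator {X : Type*} [MeasurableSpace X]
    (μ : Measure X) [IsProbabilityMeasure μ] {A : Set X} (hA : MeasurableSet A) :
    HasSubgaussianMGF (fun x => μ.real A - A.indicator 1 x) ((1 / 2) ^ 2) μ := by
  have h := hasSubgaussianMGF_of_mem_Icc (μ := μ) (X := fun x => -A.indicator 1 x)
    (a := -1) (b := 0) (by fun_prop (disch := exact hA))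
    (ae_of_all _ fun x => by by_cases hx : x ∈ A <;> simp [hx])
  convert h using 2
  · rw [integral_neg, integral_indicator_one hA]; ring
  · norm_num

lemma measureReal_pi_card_filter_add_le_le_exp {X ι : Type*} [MeasurableSpace X] [Fintype ι]
    (μ : Measure X) [IsProbabilityMeasure μ] {A : Set X} (hA : MeasurableSet A)
    {t : ℝ} (ht : 0 ≤ t) :
    (Measure.pi fun _ : ι => μ).real
        {ω | ((Finset.univ.filter fun j => ω j ∈ A).card : ℝ) + t ≤ Fintype.card ι * μ.real A}
      ≤ exp (-2 * t ^ 2 / Fintype.card ι) := by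
  set Y : X → ℝ := fun x => μ.real A - A.indicator 1 x
  have hY : ∀ j : ι, HasSubgaussianMGF (fun ω : ι → X => Y (ω j)) ((1 / 2) ^ 2)
      (Measure.pi fun _ => μ) := fun j =>
    HasSubgaussianMGF.of_map (X := Y) (Y := fun ω : ι → X => ω j)
      (measurable_pi_apply j).aemeasurable <| by
      rw [(measurePreserving_eval (fun _ => μ) j).map_eq]
      exact hasSubgaussianMGF_measureReal_sub_indicator μ hA
  have hindep : iIndepFun (fun j (ω : ι → X) => Y (ω j)) (Measure.pi fun _ => μ) :=
    iIndepFun_pi fun _ => by fun_prop (disch := exact hA)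
  have hsum : ∀ ω : ι → X, ∑ j, Y (ω j)
      = Fintype.card ι * μ.real A - (Finset.univ.filter fun j => ω j ∈ A).card := by
    intro ω
    simp [Y, Finset.sum_sub_distrib, Set.indicator_apply]
  have hoeffding :=
    HasSubgaussianMGF.measure_sum_ge_le_of_iIndepFun hindep (s := Finset.univ) (fun j _ => hY j) ht
  simp only [hsum, le_sub_iff_add_le'] at hoeffding
  refine hoeffding.trans_eq (congrArg exp ?_)
  push_cast
  rw [Finset.sum_const, Finset.card_univ, nsmul_eq_mul]
  ring

lemma Finset.sum_le_of_forall_le_div_card {ι : Type*} [Fintype ι] {s : Finset ι} {f : ι → ℝ}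
    {δ : ℝ} (hδ : 0 ≤ δ) (h : ∀ i ∈ s, f i ≤ δ / Fintype.card ι) : ∑ i ∈ s, f i ≤ δ := by
  have hcard : ∑ i ∈ s, f i ≤ s.card * (δ / Fintype.card ι) := by
    simpa using Finset.sum_le_card_nsmul s f _ h
  rcases eq_or_ne (Fintype.card ι : ℝ) 0 with hι | hι
  · rw [hι, div_zero, mul_zero] at hcard
    exact hcard.trans hδ
  · calc ∑ i ∈ s, f i ≤ s.card * (δ / Fintype.card ι) := hcard
      _ ≤ Fintype.card ι * (δ / Fintype.card ι) := by gcongr; exact_mod_cast s.card_le_univ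
      _ = δ := mul_div_cancel₀ _ hι

lemma Finset.sum_lt_of_forall_lt_div_card {ι : Type*} [Fintype ι] {s : Finset ι} {f : ι → ℝ}
    {ε : ℝ} (hε : 0 < ε) (h : ∀ i ∈ s, f i < ε / Fintype.card ι) : ∑ i ∈ s, f i < ε := by
  rcases s.eq_empty_or_nonempty with rfl | hs
  · simpa using hε
  have hι : (Fintype.card ι : ℝ) ≠ 0 := by
    have : Nonempty ι := ⟨hs.choose⟩
    exact_mod_cast Fintype.card_ne_zero
  calc ∑ i ∈ s, f i < ∑ _i ∈ s, ε / Fintype.card ι := Finset.sum_lt_sum_of_nonempty hs h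
    _ = s.card * (ε / Fintype.card ι) := by rw [Finset.sum_const, nsmul_eq_mul]
    _ ≤ Fintype.card ι * (ε / Fintype.card ι) := by gcongr; exact_mod_cast s.card_le_univ
    _ = ε := mul_div_cancel₀ _ hι

lemma ofReal_one_sub_le_measure_biInter_compl {Ω ι : Type*} [MeasurableSpace Ω]
    (P : Measure Ω) [IsProbabilityMeasure P] (s : Finset ι) (B : ι → Set Ω) {δ : ℝ}
    (h : ∑ i ∈ s, P.real (B i) ≤ δ) :
    ENNReal.ofReal (1 - δ) ≤ P (⋂ i ∈ s, (B i)ᶜ) := by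
  have hcompl : (⋂ i ∈ s, (B i)ᶜ)ᶜ = ⋃ i ∈ s, B i := by simp
  have hunion : 1 ≤ P.real (⋂ i ∈ s, (B i)ᶜ) + P.real (⋃ i ∈ s, B i) := by
    have := measureReal_union_le (μ := P) (⋂ i ∈ s, (B i)ᶜ) (⋂ i ∈ s, (B i)ᶜ)ᶜ
    rwa [Set.union_compl_self, probReal_univ, hcompl] at this
  rw [← ofReal_measureReal]
  exact ENNReal.ofReal_le_ofReal <| by linarith [measureReal_biUnion_finset_le (μ := P) s B]

lemma measureReal_pi_card_filter_lt_le_div {X : Type*} [MeasurableSpace X] (μ : Measure X)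
    [IsProbabilityMeasure μ] {A : Set X} (hA : MeasurableSet A) {k M : ℕ} (hk : 0 < k)
    {m mmax ε δ : ℝ} (hε : 0 < ε) (hδ : δ ∈ Set.Ioo (0 : ℝ) 1) (hm : m ≤ mmax)
    (hbig : (k : ℝ) / ε * log (2 * k / δ) ≤ mmax) (hM : (M : ℝ) = 2 * k / ε * mmax)
    (hheavy : ε / k ≤ μ.real A) :
    (Measure.pi fun _ : Fin M => μ).real
        {ω | ((Finset.univ.filter fun j => ω j ∈ A).card : ℝ) < m} ≤ δ / k := by
  obtain ⟨hδ0, hδ1⟩ := hδ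
  have hk' : (1 : ℝ) ≤ k := by exact_mod_cast hk
  have hlog : 0 < log (2 * k / δ) := log_pos <| by rw [lt_div_iff₀ hδ0]; linarith
  have hmmax : 0 < mmax := lt_of_lt_of_le (by positivity) hbig
  have hMA : 2 * mmax ≤ M * μ.real A := by
    calc 2 * mmax = M * (ε / k) := by rw [hM]; field_simp
      _ ≤ M * μ.real A := by gcongr
  have hsub : {ω : Fin M → X | ((Finset.univ.filter fun j => ω j ∈ A).card : ℝ) < m} ⊆
      {ω | ((Finset.univ.filter fun j => ω j ∈ A).card : ℝ) + mmax ≤ M * μ.real A} := by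
    intro ω hω
    simp only [Set.mem_ofPred_eq] at hω ⊢
    linarith
  have hexp : -2 * mmax ^ 2 / M ≤ log (δ / (2 * k)) := by
    have hexponent : -2 * mmax ^ 2 / M = -(ε / k * mmax) := by rw [hM]; field_simp
    rw [hexponent, ← inv_div (2 * (k : ℝ)), log_inv, neg_le_neg_iff]
    calc log (2 * k / δ) = ε / k * (k / ε * log (2 * k / δ)) := by field_simp
      _ ≤ ε / k * mmax := by gcongr
  calc _ ≤ _ := measureReal_mono hsub
    _ ≤ exp (-2 * mmax ^ 2 / M) := by
      simpa using measureReal_pi_card_filter_add_le_le_exp (ι := Fin M) μ hA hmmax.le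
    _ ≤ δ / (2 * k) := by
      rw [← exp_log (by positivity : 0 < δ / (2 * k))]
      exact exp_le_exp.mpr hexp
    _ ≤ δ / k := by gcongr; linarith

theorem stmt_19_general {X : Type*} [MeasurableSpace X] (μ : Measure X) [IsProbabilityMeasure μ]
    (k : ℕ) (R : Fin k → Set X)
    (hmeas : ∀ i, MeasurableSet (R i))
    (mi : Fin k → ℝ)
    (mmax : ℝ) (hub : ∀ i, mi i ≤ mmax)
    (ε δ : ℝ) (hε : ε ∈ Set.Ioo (0 : ℝ) 1) (hδ : δ ∈ Set.Ioo (0 : ℝ) 1)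
    (hbig : (k : ℝ) / ε * Real.log (2 * k / δ) ≤ mmax)
    (M : ℕ) (hM : (M : ℝ) = 2 * k / ε * mmax) :
    ENNReal.ofReal (1 - δ) ≤ (Measure.pi fun _ : Fin M => μ)
      {ω | ∑ i ∈ Finset.univ.filter
            (fun i : Fin k =>
              ((Finset.univ.filter fun j : Fin M => ω j ∈ R i).card : ℝ) < mi i),
          (μ (R i)).toReal < ε} := by
  set undersampled : Fin k → Set (Fin M → X) :=
    fun i => {ω | ((Finset.univ.filter fun j => ω j ∈ R i).card : ℝ) < mi i}
  set heavy := Finset.univ.filter fun i : Fin k => ε / k ≤ μ.real (R i)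
  refine (ofReal_one_sub_le_measure_biInter_compl _ heavy undersampled ?_).trans
    (measure_mono ?_)
  · refine Finset.sum_le_of_forall_le_div_card hδ.1.le fun i hi => ?_
    rw [Fintype.card_fin]
    exact measureReal_pi_card_filter_lt_le_div μ (hmeas i) (Fin.pos i) hε.1 hδ (hub i) hbig hM
      (Finset.mem_filter.mp hi).2
  · intro ω hω
    refine Finset.sum_lt_of_forall_lt_div_card hε.1 fun i hi => ?_
    rw [Fintype.card_fin]
    by_contra! hheavy
    exact Set.mem_iInter₂.mp hω i (Finset.mem_filter.mpr ⟨Finset.mem_univ i, hheavy⟩)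
      (Finset.mem_filter.mp hi).2

theorem stmt_19 {X : Type*} [MeasurableSpace X] (μ : Measure X) [IsProbabilityMeasure μ]
    (k : ℕ) (hk : 0 < k) (R : Fin k → Set X)
    (hmeas : ∀ i, MeasurableSet (R i))
    (hdisj : Pairwise (Function.onFun Disjoint R))
    (hcover : ⋃ i, R i = Set.univ)
    (mi : Fin k → ℝ) (hmi : ∀ i, 0 ≤ mi i)
    (mmax : ℝ) (hub : ∀ i, mi i ≤ mmax) (hex : ∃ i, mi i = mmax)
    (ε δ : ℝ) (hε : ε ∈ Set.Ioo (0 : ℝ) 1) (hδ : δ ∈ Set.Ioo (0 : ℝ) 1)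
    (hbig : (k : ℝ) / ε * Real.log (2 * k / δ) ≤ mmax)
    (M : ℕ) (hM : (M : ℝ) = 2 * k / ε * mmax) :
    ENNReal.ofReal (1 - δ) ≤ (Measure.pi fun _ : Fin M => μ)
      {ω | ∑ i ∈ Finset.univ.filter
            (fun i : Fin k =>
              ((Finset.univ.filter fun j : Fin M => ω j ∈ R i).card : ℝ) < mi i),
          (μ (R i)).toReal < ε} :=
  stmt_19_general μ k R hmeas mi mmax hub ε δ hε hδ hbig M hM
end
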